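/- Let A ∈ ℝ^{d×d} be an invertible upper triangular matrix satisfying max_{i,j∈[d], i<j} |A_{ij}| ≤ L and min_{j∈[d]} |A_{jj}| ≥ 1/M for some L, M > 0. Then A⁻¹ is upper triangular, its diagonal entries satisfy max_{j∈[d]} |A⁻¹_{jj}| ≤ M, and its strictly superdiagonal entries satisfy |A⁻¹_{ij}| ≤ M² L (M L + 1)^{j−i−1} for all i < j. -/

import Mathlib

/-!
Comparing entries of `A * A⁻¹ = 1` for the upper triangular `A` and `B = A⁻¹` gives
`A i i * B i i = 1` and `A i i * B i j = -∑_{i < k ≤ j} A i k * B k j` for `i < j`, hence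
`|B i j| ≤ M L S i` with `S i = ∑_{i < k ≤ j} |B k j|`. Then `S i = |B (i+1) j| + S (i+1)`
grows by at most the factor `M L + 1` per step, starting from `S (j-1) = |B j j| ≤ M`: a
discrete Grönwall inequality.
-/

open Finset

section Gronwall

variable {K : Type*} [CommSemiring K] [PartialOrder K] [IsOrderedRing K]
  {f : ℕ → K} {c M : K} {j : ℕ}

theorem sum_Ioc_le_mul_pow_of_le_mul_sum_Ioc (hc : 0 ≤ c) (hj : f j ≤ M)
    (hrec : ∀ i < j, f i ≤ c * ∑ k ∈ Ioc i j, f k) :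
    ∀ n i, i + n + 1 = j → ∑ k ∈ Ioc i j, f k ≤ M * (c + 1) ^ n
  | 0, i, hi => by
    subst hi
    simpa [Nat.Ioc_succ_singleton] using hj
  | n + 1, i, hi => by
    have ih := sum_Ioc_le_mul_pow_of_le_mul_sum_Ioc hc hj hrec n (i + 1) (by omega)
    rw [← Icc_add_one_left_eq_Ioc, Icc_eq_cons_Ioc (by omega), sum_cons]
    calc f (i + 1) + ∑ k ∈ Ioc (i + 1) j, f k
        ≤ c * ∑ k ∈ Ioc (i + 1) j, f k + ∑ k ∈ Ioc (i + 1) j, f k :=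
          add_le_add_left (hrec _ (by omega)) _
      _ = (c + 1) * ∑ k ∈ Ioc (i + 1) j, f k := by ring
      _ ≤ (c + 1) * (M * (c + 1) ^ n) := mul_le_mul_of_nonneg_left ih (add_nonneg hc zero_le_one)
      _ = M * (c + 1) ^ (n + 1) := by ring

theorem le_mul_pow_of_le_mul_sum_Ioc (hc : 0 ≤ c) (hj : f j ≤ M)
    (hrec : ∀ i < j, f i ≤ c * ∑ k ∈ Ioc i j, f k) {i : ℕ} (hij : i < j) :
    f i ≤ c * (M * (c + 1) ^ (j - i - 1)) :=
  (hrec i hij).trans <| mul_le_mul_of_nonneg_left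
    (sum_Ioc_le_mul_pow_of_le_mul_sum_Ioc hc hj hrec _ i (by omega)) hc

theorem Fin.le_mul_pow_of_le_mul_sum_Ioc {d : ℕ} {g : Fin d → K} {j : Fin d} (hc : 0 ≤ c)
    (hj : g j ≤ M) (hrec : ∀ i < j, g i ≤ c * ∑ k ∈ Ioc i j, g k) {i : Fin d} (hij : i < j) :
    g i ≤ c * (M * (c + 1) ^ ((j : ℕ) - i - 1)) := by
  let f : ℕ → K := fun k => if h : k < d then g ⟨k, h⟩ else 0
  have hsum (i : Fin d) : ∑ k ∈ Ioc i j, g k = ∑ k ∈ Ioc (i : ℕ) j, f k := by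
    simp [← Fin.map_valEmbedding_Ioc, f]
  refine (dif_pos i.2).symm.trans_le (_root_.le_mul_pow_of_le_mul_sum_Ioc (f := f) hc ?_ ?_ hij)
  · simpa [f] using hj
  · intro k hk
    simpa [f, hk.trans j.2, hsum] using hrec ⟨k, hk.trans j.2⟩ hk

end Gronwall

namespace Matrix

variable {ι : Type*} [LinearOrder ι] [Fintype ι] [LocallyFiniteOrder ι]

section Semiring

variable {R : Type*} [NonUnitalNonAssocSemiring R] {A B : Matrix ι ι R}

theorem IsUpperTriangular.mul_apply_eq_sum_Icc (hA : A.IsUpperTriangular)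
    (hB : B.IsUpperTriangular) (i j : ι) : (A * B) i j = ∑ k ∈ Icc i j, A i k * B k j := by
  rw [mul_apply]
  refine (sum_subset (subset_univ _) fun k _ hk => ?_).symm
  rcases not_and_or.mp (mem_Icc.not.mp hk) with hik | hkj
  · rw [hA (not_le.mp hik), zero_mul]
  · rw [hB (not_le.mp hkj), mul_zero]

theorem IsUpperTriangular.mul_apply_self (hA : A.IsUpperTriangular)
    (hB : B.IsUpperTriangular) (i : ι) : (A * B) i i = A i i * B i i := by
  rw [hA.mul_apply_eq_sum_Icc hB, Icc_self, sum_singleton]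

theorem IsUpperTriangular.mul_apply_of_lt (hA : A.IsUpperTriangular)
    (hB : B.IsUpperTriangular) {i j : ι} (hij : i < j) :
    (A * B) i j = A i i * B i j + ∑ k ∈ Ioc i j, A i k * B k j := by
  rw [hA.mul_apply_eq_sum_Icc hB, Icc_eq_cons_Ioc hij.le, sum_cons]

end Semiring

variable [DecidableEq ι] {K : Type*} [Field K] [LinearOrder K] [IsStrictOrderedRing K]
  {A B : Matrix ι ι K} {L M : K}

theorem IsUpperTriangular.abs_apply_self_le_of_mul_eq_one (hA : A.IsUpperTriangular)
    (hB : B.IsUpperTriangular) (hAB : A * B = 1) (hM : 0 < M) {i : ι}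
    (hdiag : 1 / M ≤ |A i i|) : |B i i| ≤ M := by
  have h : A i i * B i i = 1 := by rw [← hA.mul_apply_self hB, hAB, one_apply_eq]
  rw [eq_inv_of_mul_eq_one_right h, abs_inv]
  exact inv_le_of_inv_le₀ hM (by rwa [← one_div])

theorem IsUpperTriangular.abs_apply_le_mul_sum_Ioc_of_mul_eq_one (hA : A.IsUpperTriangular)
    (hB : B.IsUpperTriangular) (hAB : A * B = 1) (hM : 0 < M) {i j : ι} (hij : i < j)
    (hoff : ∀ k, i < k → |A i k| ≤ L) (hdiag : 1 / M ≤ |A i i|) :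
    |B i j| ≤ M * L * ∑ k ∈ Ioc i j, |B k j| := by
  have hrow : A i i * B i j = -∑ k ∈ Ioc i j, A i k * B k j := by
    have h := hA.mul_apply_of_lt hB hij
    rw [hAB, one_apply_ne hij.ne] at h
    exact eq_neg_of_add_eq_zero_left h.symm
  have hbound : |A i i| * |B i j| ≤ L * ∑ k ∈ Ioc i j, |B k j| :=
    calc |A i i| * |B i j| = |∑ k ∈ Ioc i j, A i k * B k j| := by rw [← abs_mul, hrow, abs_neg]
      _ ≤ ∑ k ∈ Ioc i j, |A i k * B k j| := abs_sum_le_sum_abs _ _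
      _ ≤ ∑ k ∈ Ioc i j, L * |B k j| := sum_le_sum fun k hk => by
          rw [abs_mul]
          exact mul_le_mul_of_nonneg_right (hoff k (mem_Ioc.mp hk).1) (abs_nonneg _)
      _ = L * ∑ k ∈ Ioc i j, |B k j| := (mul_sum _ _ _).symm
  calc |B i j| = M * (1 / M * |B i j|) := by field_simp
    _ ≤ M * (|A i i| * |B i j|) := by gcongr
    _ ≤ M * (L * ∑ k ∈ Ioc i j, |B k j|) := by gcongr
    _ = M * L * ∑ k ∈ Ioc i j, |B k j| := by ring

end Matrix

open Matrix

theorem triangular_inverse_bounds_general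
    (d : ℕ) (A : Matrix (Fin d) (Fin d) ℝ)
    (htri : A.BlockTriangular id)
    (L M : ℝ) (hM : 0 < M)
    (hoff : ∀ i j : Fin d, i < j → |A i j| ≤ L)
    (hdiag : ∀ j : Fin d, 1 / M ≤ |A j j|) :
    (A⁻¹).BlockTriangular id ∧ (∀ j : Fin d, |A⁻¹ j j| ≤ M) ∧
      ∀ i j : Fin d, i < j →
        |A⁻¹ i j| ≤ M ^ 2 * L * (M * L + 1) ^ ((j : ℕ) - (i : ℕ) - 1) := by
  have hinv : IsUnit A.det := by
    rw [det_of_isUpperTriangular htri, isUnit_iff_ne_zero, prod_ne_zero_iff]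
    exact fun j _ => abs_pos.mp ((one_div_pos.mpr hM).trans_le (hdiag j))
  have := A.invertibleOfIsUnitDet hinv
  have hB : A⁻¹.IsUpperTriangular := blockTriangular_inv_of_blockTriangular htri
  have hAB : A * A⁻¹ = 1 := mul_nonsing_inv A hinv
  have hBdiag (j : Fin d) : |A⁻¹ j j| ≤ M :=
    IsUpperTriangular.abs_apply_self_le_of_mul_eq_one htri hB hAB hM (hdiag j)
  refine ⟨hB, hBdiag, fun i j hij => ?_⟩
  have hL : 0 ≤ L := (abs_nonneg _).trans (hoff i j hij)
  calc |A⁻¹ i j| ≤ M * L * (M * (M * L + 1) ^ ((j : ℕ) - i - 1)) :=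
        Fin.le_mul_pow_of_le_mul_sum_Ioc (mul_nonneg hM.le hL) (hBdiag j) (fun k hk =>
          IsUpperTriangular.abs_apply_le_mul_sum_Ioc_of_mul_eq_one htri hB hAB hM hk
            (hoff k) (hdiag k)) hij
    _ = M ^ 2 * L * (M * L + 1) ^ ((j : ℕ) - i - 1) := by ring

/-- **Inverse of a bounded upper triangular matrix (Lemma 7).**  If `A` is invertible and
upper triangular with `|A_{ij}| ≤ L` above the diagonal and `|A_{jj}| ≥ 1/M` on the
diagonal, then `A⁻¹` is upper triangular with `|A⁻¹_{jj}| ≤ M` and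
`|A⁻¹_{ij}| ≤ M²L(ML+1)^{j−i−1}` for `i < j`. -/
theorem triangular_inverse_bounds
    (d : ℕ) (A : Matrix (Fin d) (Fin d) ℝ)
    (htri : A.BlockTriangular id) (hinv : IsUnit A.det)
    (L M : ℝ) (hL : 0 < L) (hM : 0 < M)
    (hoff : ∀ i j : Fin d, i < j → |A i j| ≤ L)
    (hdiag : ∀ j : Fin d, 1 / M ≤ |A j j|) :
    (A⁻¹).BlockTriangular id ∧ (∀ j : Fin d, |A⁻¹ j j| ≤ M) ∧
      ∀ i j : Fin d, i < j →
        |A⁻¹ i j| ≤ M ^ 2 * L * (M * L + 1) ^ ((j : ℕ) - (i : ℕ) - 1) :=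
  triangular_inverse_bounds_general d A htri L M hM hoff hdiag
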